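/- Fix n ≥ 2 and a real number q > 0. For 1 ≤ i < n let S_i be the matrix of the standard braid generator s_{i,i+1} in the simplicial representation (as defined in the context). Then each S_i is invertible, and every matrix M in the subgroup of the group of invertible real matrices indexed by 𝓔ₙ generated by S₁, …, S_{n−1} maps the set of simplicial vectors into itself: if v ∈ ℝ^{𝓔ₙ} is simplicial, then M·v is simplicial. (This is the statement that the simplicial representation of the n-string braid group preserves the set of C(n,2)-tuples of positive reals representing the squared edge lengths of a nondegenerate euclidean simplex with n labeled vertices.) -/

import Mathlib

/-- The index set `𝓔ₙ` of edges: pairs `(k,l)` with `k < l` in `Fin n`. -/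
abbrev EdgeIdx (n : ℕ) : Type := {p : Fin n × Fin n // p.1 < p.2}

/-- The standard basis vector `e_{ab}` of `ℝ^{𝓔ₙ}`, viewed symmetrically in `a, b`
(with the convention `e_{mm} = 0`). -/
def eVec {n : ℕ} (a b : Fin n) : EdgeIdx n → ℝ :=
  fun c => if (c.1.1 = a ∧ c.1.2 = b) ∨ (c.1.1 = b ∧ c.1.2 = a) then 1 else 0

/-- The matrix `S_i` of the standard braid generator `s_{i,i+1}` (here `j = i+1`) in the
simplicial representation (the LKB representation at `t = 1`), given row-wise. -/
def simpGenMatrix (n : ℕ) (i j : Fin n) (q : ℝ) : Matrix (EdgeIdx n) (EdgeIdx n) ℝ :=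
  fun r c =>
    if r.1.1 = i ∧ r.1.2 = j then q ^ 2 * eVec i j c
    else if r.1.1 = i then eVec j r.1.2 c
    else if r.1.2 = i then eVec r.1.1 j c
    else if r.1.2 = j then
      (q ^ 2 - q) * eVec i j c + q * eVec r.1.1 i c + (1 - q) * eVec r.1.1 j c
    else if r.1.1 = j then
      (q ^ 2 - q) * eVec i j c + q * eVec i r.1.2 c + (1 - q) * eVec j r.1.2 c
    else eVec r.1.1 r.1.2 c


/-- A vector `v ∈ ℝ^{𝓔ₙ}` is *simplicial* if it is the vector of squared edge lengths of
a nondegenerate euclidean simplex with `n` labeled vertices, i.e. there is an affinely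
independent family `p : Fin n → ℝ^{n−1}` with `v(k,l) = ‖p_k − p_l‖²`. -/
def IsSimplicial (n : ℕ) (v : EdgeIdx n → ℝ) : Prop :=
  ∃ p : Fin n → EuclideanSpace ℝ (Fin (n - 1)), AffineIndependent ℝ p ∧
    ∀ c : EdgeIdx n, v c = ‖p c.1.1 - p c.1.2‖ ^ 2

/-!
`S_i` is the action on squared edge lengths of a move of the vertices: it sends the
squared-distance vector of `p` to that of the family in which `p_i` is replaced by `p_{i+1}` and
`p_{i+1}` by `q • p_i + (1 - q) • p_{i+1}` (Stewart's identity gives the mixed rows). For `q ≠ 0`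
the move is invertible and preserves the affine span, hence affine independence, so `S_i` and
`S_i⁻¹` preserve simplicial vectors, and so do their products. `S_i` is invertible because its
range contains every squared-distance vector, and these span `ℝ^𝓔ₙ`: on the real line, the
squared-distance vectors of `e_a - e_b` and `e_a + e_b` differ by `4 e_{ab}`.
-/

open Matrix AffineMap

theorem AffineIndependent.of_affineSpan_le {k V P ι : Type*} [DivisionRing k]
    [AddCommGroup V] [Module k V] [AddTorsor V P] [Fintype ι] {p p' : ι → P}
    (hp : AffineIndependent k p)
    (h : affineSpan k (Set.range p) ≤ affineSpan k (Set.range p')) :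
    AffineIndependent k p' := by
  cases isEmpty_or_nonempty ι
  · exact affineIndependent_of_subsingleton k p'
  obtain ⟨m, hm⟩ := Nat.exists_eq_succ_of_ne_zero (Fintype.card_ne_zero (α := ι))
  rw [affineIndependent_iff_le_finrank_vectorSpan k _ hm] at hp ⊢
  rw [← direction_affineSpan] at hp ⊢
  exact hp.trans (Submodule.finrank_mono (AffineSubspace.direction_le h))

section BraidMove

variable {k V P : Type*} [DivisionRing k] [AddCommGroup V] [Module k V] [AddTorsor V P] {n : ℕ}

variable (i j : Fin n) (q : k)

def braidMove (p : Fin n → P) : Fin n → P :=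
  fun m => if m = i then p j else if m = j then lineMap (p j) (p i) q else p m

def braidMoveInv (p : Fin n → P) : Fin n → P :=
  fun m => if m = i then lineMap (p i) (p j) q⁻¹ else if m = j then p i else p m

variable {i j q}

theorem braidMove_braidMoveInv (hq : q ≠ 0) (p : Fin n → P) :
    braidMove i j q (braidMoveInv i j q p) = p := by
  funext m
  simp only [braidMove, braidMoveInv]
  split_ifs <;> subst_vars <;> simp_all

theorem braidMoveInv_braidMove (hq : q ≠ 0) (p : Fin n → P) :
    braidMoveInv i j q (braidMove i j q p) = p := by
  funext m
  simp only [braidMove, braidMoveInv]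
  split_ifs <;> subst_vars <;> simp_all

theorem range_braidMove_subset_affineSpan (p : Fin n → P) :
    Set.range (braidMove i j q p) ⊆ affineSpan k (Set.range p) := by
  have hp : ∀ m, p m ∈ affineSpan k (Set.range p) := fun m =>
    subset_affineSpan k _ ⟨m, rfl⟩
  rintro _ ⟨m, rfl⟩
  unfold braidMove
  split_ifs
  exacts [hp j, lineMap_mem q (hp j) (hp i), hp m]

theorem range_braidMoveInv_subset_affineSpan (p : Fin n → P) :
    Set.range (braidMoveInv i j q p) ⊆ affineSpan k (Set.range p) := by
  have hp : ∀ m, p m ∈ affineSpan k (Set.range p) := fun m =>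
    subset_affineSpan k _ ⟨m, rfl⟩
  rintro _ ⟨m, rfl⟩
  unfold braidMoveInv
  split_ifs
  exacts [lineMap_mem q⁻¹ (hp i) (hp j), hp i, hp m]

theorem affineSpan_range_braidMove (hq : q ≠ 0) (p : Fin n → P) :
    affineSpan k (Set.range (braidMove i j q p)) = affineSpan k (Set.range p) := by
  refine le_antisymm (affineSpan_le.2 (range_braidMove_subset_affineSpan p)) ?_
  conv_lhs => rw [← braidMoveInv_braidMove (i := i) (j := j) hq p]
  exact affineSpan_le.2 (range_braidMoveInv_subset_affineSpan _)

theorem AffineIndependent.braidMove {p : Fin n → P} (hp : AffineIndependent k p) (hq : q ≠ 0) :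
    AffineIndependent k (braidMove i j q p) :=
  hp.of_affineSpan_le (affineSpan_range_braidMove hq p).ge

theorem AffineIndependent.braidMoveInv {p : Fin n → P} (hp : AffineIndependent k p) (hq : q ≠ 0) :
    AffineIndependent k (braidMoveInv i j q p) := by
  rw [← braidMove_braidMoveInv hq p] at hp
  exact hp.of_affineSpan_le (affineSpan_range_braidMove hq _).le

end BraidMove

section EdgeVectors

variable {n : ℕ}

theorem eVec_comm (a b : Fin n) : eVec a b = eVec b a := by
  funext c
  simp only [eVec, or_comm]

theorem eVec_self (a : Fin n) : eVec a a = 0 := by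
  funext c
  refine if_neg ?_
  rintro (⟨h₁, h₂⟩ | ⟨h₁, h₂⟩) <;> exact c.2.ne (h₁.trans h₂.symm)

theorem eVec_eq_single {a b : Fin n} (h : a < b) : eVec a b = Pi.single ⟨(a, b), h⟩ 1 := by
  funext c
  simp only [eVec, Pi.single_apply, Subtype.ext_iff, Prod.ext_iff]
  refine if_congr ⟨?_, Or.inl⟩ rfl rfl
  rintro (hab | ⟨rfl, rfl⟩)
  · exact hab
  · exact absurd c.2 h.not_gt

end EdgeVectors

section SquaredDistances

variable {n : ℕ} {E : Type*} [NormedAddCommGroup E]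

theorem norm_sub_lineMap_sq [InnerProductSpace ℝ E] (x y z : E) (t : ℝ) :
    ‖z - lineMap y x t‖ ^ 2 =
      (t ^ 2 - t) * ‖x - y‖ ^ 2 + t * ‖z - x‖ ^ 2 + (1 - t) * ‖z - y‖ ^ 2 := by
  rw [lineMap_apply_module,
    show z - ((1 - t) • y + t • x) = t • (z - x) + (1 - t) • (z - y) by module,
    norm_add_sq_real, norm_smul, norm_smul, real_inner_smul_left, real_inner_smul_right,
    show x - y = (z - y) - (z - x) by abel, norm_sub_sq_real (z - y)]
  simp only [Real.norm_eq_abs, mul_pow, sq_abs, real_inner_comm (z - x)]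
  ring

def sqDistVec (p : Fin n → E) : EdgeIdx n → ℝ :=
  fun c => ‖p c.1.1 - p c.1.2‖ ^ 2

theorem eVec_dotProduct_sqDistVec (p : Fin n → E) (a b : Fin n) :
    eVec a b ⬝ᵥ sqDistVec p = ‖p a - p b‖ ^ 2 := by
  rcases lt_trichotomy a b with h | rfl | h
  · rw [eVec_eq_single h, single_one_dotProduct]
    rfl
  · simp [eVec_self]
  · rw [eVec_comm, eVec_eq_single h, single_one_dotProduct, norm_sub_rev]
    rfl

theorem isSimplicial_iff {v : EdgeIdx n → ℝ} :
    IsSimplicial n v ↔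
      ∃ p : Fin n → EuclideanSpace ℝ (Fin (n - 1)), AffineIndependent ℝ p ∧ sqDistVec p = v :=
  exists_congr fun _ => and_congr_right' ⟨fun h => funext fun c => (h c).symm,
    fun h c => congrFun h.symm c⟩

theorem sqDistVec_sub_single_sub_sqDistVec_add_single (c : EdgeIdx n) :
    sqDistVec (Pi.single c.1.1 1 - Pi.single c.1.2 1 : Fin n → ℝ) -
        sqDistVec (Pi.single c.1.1 1 + Pi.single c.1.2 1 : Fin n → ℝ) =
      (4 : ℝ) • Pi.single c 1 := by
  obtain ⟨⟨a, b⟩, hab⟩ := c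
  funext ⟨⟨k, l⟩, hkl⟩
  dsimp only at hab hkl
  simp only [sqDistVec, Pi.sub_apply, Pi.add_apply, Pi.single_apply, Pi.smul_apply,
    Subtype.mk.injEq, Prod.mk.injEq, Real.norm_eq_abs, sq_abs, smul_eq_mul]
  split_ifs <;> subst_vars <;> first | (exfalso; order) | norm_num at *

theorem span_range_sqDistVec :
    Submodule.span ℝ (Set.range (sqDistVec : (Fin n → ℝ) → EdgeIdx n → ℝ)) = ⊤ := by
  rw [eq_top_iff, ← (Pi.basisFun ℝ (EdgeIdx n)).span_eq, Submodule.span_le]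
  rintro _ ⟨c, rfl⟩
  have hc := sqDistVec_sub_single_sub_sqDistVec_add_single c
  rw [Pi.basisFun_apply, ← inv_smul_smul₀ (four_ne_zero (α := ℝ)) (Pi.single c 1), ← hc]
  exact Submodule.smul_mem _ _ (Submodule.sub_mem _ (Submodule.subset_span ⟨_, rfl⟩)
    (Submodule.subset_span ⟨_, rfl⟩))

end SquaredDistances

section SimplicialRepresentation

variable {n : ℕ} {i j : Fin n} {q : ℝ}

theorem simpGenMatrix_mulVec_sqDistVec {E : Type*} [NormedAddCommGroup E]
    [InnerProductSpace ℝ E] (hij : i < j) (p : Fin n → E) :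
    simpGenMatrix n i j q *ᵥ sqDistVec p = sqDistVec (braidMove i j q p) := by
  ext ⟨⟨k, l⟩, hkl⟩
  have hrow : simpGenMatrix n i j q ⟨(k, l), hkl⟩ =
      if k = i ∧ l = j then q ^ 2 • eVec i j
      else if k = i then eVec j l
      else if l = i then eVec k j
      else if l = j then (q ^ 2 - q) • eVec i j + q • eVec k i + (1 - q) • eVec k j
      else if k = j then (q ^ 2 - q) • eVec i j + q • eVec i l + (1 - q) • eVec j l
      else eVec k l := by
    funext c
    simp only [simpGenMatrix]
    split_ifs <;> rfl
  rw [mulVec, hrow]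
  clear hrow
  simp only [sqDistVec, braidMove]
  split_ifs <;>
    simp only [add_dotProduct, smul_dotProduct, eVec_dotProduct_sqDistVec, smul_eq_mul]
  -- The consistent cases are literal equalities or instances of Stewart's identity.
  all_goals subst_vars
  all_goals first
    | rfl
    | (exfalso; order)
    | (exfalso; tauto)
    | exact (norm_sub_lineMap_sq _ _ _ _).symm
    | (rw [norm_sub_rev (lineMap _ _ _), norm_sub_lineMap_sq, norm_sub_rev (p l),
        norm_sub_rev (p l)])
    | (rw [norm_sub_lineMap_sq, sub_self, norm_zero, norm_sub_rev]; ring)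

theorem isUnit_simpGenMatrix (hij : i < j) (hq : q ≠ 0) : IsUnit (simpGenMatrix n i j q) := by
  rw [← mulVec_surjective_iff_isUnit, ← coe_mulVecLin, ← LinearMap.range_eq_top, eq_top_iff,
    ← span_range_sqDistVec, Submodule.span_le]
  rintro _ ⟨p, rfl⟩
  exact ⟨sqDistVec (braidMoveInv i j q p), by
    rw [mulVecLin_apply, simpGenMatrix_mulVec_sqDistVec hij, braidMove_braidMoveInv hq]⟩

theorem IsSimplicial.simpGenMatrix_mulVec {v : EdgeIdx n → ℝ} (hv : IsSimplicial n v)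
    (hij : i < j) (hq : q ≠ 0) : IsSimplicial n (simpGenMatrix n i j q *ᵥ v) := by
  obtain ⟨p, hp, rfl⟩ := isSimplicial_iff.1 hv
  exact isSimplicial_iff.2
    ⟨_, hp.braidMove hq, (simpGenMatrix_mulVec_sqDistVec hij p).symm⟩

theorem IsSimplicial.simpGenMatrix_inv_mulVec {v : EdgeIdx n → ℝ} (hv : IsSimplicial n v)
    (hij : i < j) (hq : q ≠ 0) : IsSimplicial n ((simpGenMatrix n i j q)⁻¹ *ᵥ v) := by
  obtain ⟨p, hp, rfl⟩ := isSimplicial_iff.1 hv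
  refine isSimplicial_iff.2 ⟨braidMoveInv i j q p, hp.braidMoveInv hq, ?_⟩
  have hdet := (isUnit_iff_isUnit_det _).1 (isUnit_simpGenMatrix hij hq)
  have h := simpGenMatrix_mulVec_sqDistVec (q := q) hij (braidMoveInv i j q p)
  rw [braidMove_braidMoveInv hq] at h
  rw [← h, mulVec_mulVec, nonsing_inv_mul _ hdet, one_mulVec]

end SimplicialRepresentation

theorem simplicial_rep_preserves_simplices_general (n : ℕ) (q : ℝ) (hq : 0 < q) :
    (∀ i j : Fin n, (i : ℕ) + 1 = (j : ℕ) → IsUnit (simpGenMatrix n i j q)) ∧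
    (∀ M : (Matrix (EdgeIdx n) (EdgeIdx n) ℝ)ˣ,
      M ∈ Subgroup.closure {M : (Matrix (EdgeIdx n) (EdgeIdx n) ℝ)ˣ |
        ∃ i j : Fin n, (i : ℕ) + 1 = (j : ℕ) ∧ (M : Matrix (EdgeIdx n) (EdgeIdx n) ℝ)
          = simpGenMatrix n i j q} →
      ∀ v : EdgeIdx n → ℝ, IsSimplicial n v →
        IsSimplicial n ((M : Matrix (EdgeIdx n) (EdgeIdx n) ℝ).mulVec v)) := by
  have hlt {i j : Fin n} (hij : (i : ℕ) + 1 = (j : ℕ)) : i < j := Fin.lt_def.2 (by omega)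
  refine ⟨fun i j hij => isUnit_simpGenMatrix (hlt hij) hq.ne', fun M hM => ?_⟩
  induction hM using Subgroup.closure_induction'' with
  | mem M hM =>
    obtain ⟨i, j, hij, hM⟩ := hM
    exact fun v hv => hM ▸ hv.simpGenMatrix_mulVec (hlt hij) hq.ne'
  | inv_mem M hM =>
    obtain ⟨i, j, hij, hM⟩ := hM
    intro v hv
    rw [coe_units_inv, hM]
    exact hv.simpGenMatrix_inv_mulVec (hlt hij) hq.ne'
  | one => simp
  | mul M N _ _ hM hN =>
    intro v hv
    rw [Units.val_mul, ← mulVec_mulVec]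
    exact hM _ (hN _ hv)

/-- **Braids reshape simplices.** For `q > 0`, each matrix `S_i` of a standard braid
generator in the simplicial representation is invertible, and every element of the
subgroup of invertible matrices generated by `S₁, …, S_{n−1}` (the image of the
simplicial representation of the `n`-string braid group) maps simplicial vectors to
simplicial vectors. -/
theorem simplicial_rep_preserves_simplices (n : ℕ) (hn : 2 ≤ n) (q : ℝ) (hq : 0 < q) :
    (∀ i j : Fin n, (i : ℕ) + 1 = (j : ℕ) → IsUnit (simpGenMatrix n i j q)) ∧
    (∀ M : (Matrix (EdgeIdx n) (EdgeIdx n) ℝ)ˣ,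
      M ∈ Subgroup.closure {M : (Matrix (EdgeIdx n) (EdgeIdx n) ℝ)ˣ |
        ∃ i j : Fin n, (i : ℕ) + 1 = (j : ℕ) ∧ (M : Matrix (EdgeIdx n) (EdgeIdx n) ℝ)
          = simpGenMatrix n i j q} →
      ∀ v : EdgeIdx n → ℝ, IsSimplicial n v →
        IsSimplicial n ((M : Matrix (EdgeIdx n) (EdgeIdx n) ℝ).mulVec v)) :=
  simplicial_rep_preserves_simplices_general n q hq
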